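/- In Cl(ℝ³), let Y = AM + MB where A, B, M are multivectors with A invertible. Then (B + B̄ + A⁻¹BB̄ + A) M = A⁻¹ Y B̄ + Y, where B̄ is the Clifford conjugate of B; consequently if B + B̄ + A⁻¹BB̄ + A is invertible, M = (B + B̄ + A⁻¹BB̄ + A)⁻¹ (A⁻¹ Y B̄ + Y) solves Sylvester's equation. -/
import Mathlib


noncomputable section
open CliffordAlgebra

/-- The Euclidean quadratic form on `ℝ³`. -/
def Q3 : QuadraticForm ℝ (Fin 3 → ℝ) :=
  QuadraticMap.weightedSumSquares ℝ (fun _ : Fin 3 => (1 : ℝ))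

/-- The Clifford algebra `Cl(ℝ³)`. -/
abbrev Cl3 := CliffordAlgebra Q3

/-- The orthonormal basis vectors `e₁, e₂, e₃` of `Cl(ℝ³)`. -/
def e (i : Fin 3) : Cl3 := ι Q3 (Pi.single i 1)

/-- The pseudoscalar `j = e₁e₂e₃` of `Cl(ℝ³)`. -/
def jj : Cl3 := e 0 * e 1 * e 2
/-- Clifford conjugation: the composition of reversion and grade involution. -/
def cliffConj (M : Cl3) : Cl3 := reverse (involute M)

lemma Q3_single (i : Fin 3) : Q3 (Pi.single i 1) = 1 := by
  simp [Q3, QuadraticMap.weightedSumSquares_apply, Pi.single_apply]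

lemma e_sq (i : Fin 3) : e i * e i = 1 := by
  rw [e, ι_sq_scalar, Q3_single, map_one]

lemma e_anticomm {i j : Fin 3} (h : i ≠ j) : e i * e j = - (e j * e i) := by
  have := ι_mul_ι_add_swap (Q := Q3) (Pi.single i 1) (Pi.single j 1)
  have hp : QuadraticMap.polar Q3 (Pi.single i 1) (Pi.single j 1) = 0 := by
    simp [QuadraticMap.polar, Q3, QuadraticMap.weightedSumSquares_apply,
      Pi.single_apply, h, Ne.symm h, add_mul, mul_add, Finset.sum_add_distrib]
  rw [hp, map_zero] at this
  rw [e, e]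
  exact eq_neg_of_add_eq_zero_left this

lemma e_swap {i j : Fin 3} (h : i ≠ j) (x : Cl3) :
    e i * (e j * x) = -(e j * (e i * x)) := by
  rw [← mul_assoc, e_anticomm h, neg_mul, mul_assoc]

lemma e_cancel (i : Fin 3) (x : Cl3) : e i * (e i * x) = x := by
  rw [← mul_assoc, e_sq, one_mul]

lemma jj_comm_e0 : jj * e 0 = e 0 * jj := by
  simp only [jj, mul_assoc]
  rw [e_anticomm (show (2:Fin 3) ≠ 0 by decide), mul_neg, mul_neg,
    e_swap (show (1:Fin 3) ≠ 0 by decide), mul_neg, neg_neg]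

lemma jj_comm_e1 : jj * e 1 = e 1 * jj := by
  simp only [jj, mul_assoc]
  rw [e_anticomm (show (2:Fin 3) ≠ 1 by decide), mul_neg, mul_neg, e_cancel,
    e_swap (show (0:Fin 3) ≠ 1 by decide), mul_neg, e_cancel]

lemma jj_comm_e2 : jj * e 2 = e 2 * jj := by
  simp only [jj, mul_assoc]
  rw [e_sq, mul_one, e_swap (show (2:Fin 3) ≠ 0 by decide),
    e_swap (show (2:Fin 3) ≠ 1 by decide), mul_neg, neg_neg, e_sq, mul_one]

lemma jj_comm_ι (v : Fin 3 → ℝ) : jj * ι Q3 v = ι Q3 v * jj := by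
  have hv : v = v 0 • (Pi.single 0 1 : Fin 3 → ℝ) + v 1 • (Pi.single 1 1 : Fin 3 → ℝ) + v 2 • (Pi.single 2 1 : Fin 3 → ℝ) := by
    ext i; fin_cases i <;> simp
  rw [hv]
  simp only [map_add, map_smul, mul_add, add_mul, mul_smul_comm, smul_mul_assoc]
  rw [show ι Q3 (Pi.single 0 1) = e 0 from rfl, show ι Q3 (Pi.single 1 1) = e 1 from rfl,
    show ι Q3 (Pi.single 2 1) = e 2 from rfl, jj_comm_e0, jj_comm_e1, jj_comm_e2]

lemma jj_central (x : Cl3) : jj * x = x * jj := by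
  induction x using CliffordAlgebra.induction with
  | algebraMap r => rw [Algebra.commutes]
  | ι v => exact jj_comm_ι v
  | mul a b ha hb => rw [← mul_assoc, ha, mul_assoc, hb, mul_assoc]
  | add a b ha hb => rw [mul_add, add_mul, ha, hb]

lemma e10 (x : Cl3) : e 1 * (e 0 * x) = -(e 0 * (e 1 * x)) :=
  e_swap (by decide) x
lemma e20 (x : Cl3) : e 2 * (e 0 * x) = -(e 0 * (e 2 * x)) :=
  e_swap (by decide) x
lemma e21 (x : Cl3) : e 2 * (e 1 * x) = -(e 1 * (e 2 * x)) :=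
  e_swap (by decide) x
lemma e10' : e 1 * e 0 = -(e 0 * e 1) := e_anticomm (by decide)
lemma e20' : e 2 * e 0 = -(e 0 * e 2) := e_anticomm (by decide)
lemma e21' : e 2 * e 1 = -(e 1 * e 2) := e_anticomm (by decide)

lemma p1_01 : e 1 * (e 0 * e 1) = -(e 0) := by rw [e10, e_sq, mul_one]
lemma p1_012 : e 1 * (e 0 * (e 1 * e 2)) = -(e 0 * e 2) := by rw [e10, e_cancel]
lemma p2_01 : e 2 * (e 0 * e 1) = e 0 * (e 1 * e 2) := by
  rw [e20, e21', mul_neg, neg_neg]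
lemma p2_02 : e 2 * (e 0 * e 2) = -(e 0) := by rw [e20, e_sq, mul_one]
lemma p2_12 : e 2 * (e 1 * e 2) = -(e 1) := by rw [e21, e_sq, mul_one]
lemma p2_012 : e 2 * (e 0 * (e 1 * e 2)) = e 0 * e 1 := by
  rw [e20, e21, mul_neg, neg_neg, e_sq, mul_one]

def SS : Submodule ℝ Cl3 :=
  Submodule.span ℝ {1, e 0, e 1, e 2, e 0 * e 1, e 0 * e 2, e 1 * e 2, e 0 * (e 1 * e 2)}

lemma one_mem_SS : (1 : Cl3) ∈ SS := Submodule.subset_span (by simp)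
lemma e0_mem : e 0 ∈ SS := Submodule.subset_span (by simp)
lemma e1_mem : e 1 ∈ SS := Submodule.subset_span (by simp)
lemma e2_mem : e 2 ∈ SS := Submodule.subset_span (by simp)
lemma e01_mem : e 0 * e 1 ∈ SS := Submodule.subset_span (by simp)
lemma e02_mem : e 0 * e 2 ∈ SS := Submodule.subset_span (by simp)
lemma e12_mem : e 1 * e 2 ∈ SS := Submodule.subset_span (by simp)
lemma e012_mem : e 0 * (e 1 * e 2) ∈ SS := Submodule.subset_span (by simp)

lemma closed_e0 : ∀ s ∈ SS, e 0 * s ∈ SS := by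
  intro s hs
  induction hs using Submodule.span_induction with
  | mem x hx =>
    rcases hx with rfl|rfl|rfl|rfl|rfl|rfl|rfl|rfl
    · rw [mul_one]; exact e0_mem
    · rw [e_sq]; exact one_mem_SS
    · exact e01_mem
    · exact e02_mem
    · rw [e_cancel]; exact e1_mem
    · rw [e_cancel]; exact e2_mem
    · exact e012_mem
    · rw [e_cancel]; exact e12_mem
  | zero => rw [mul_zero]; exact Submodule.zero_mem SS
  | add x y _ _ hx hy => rw [mul_add]; exact Submodule.add_mem _ hx hy
  | smul r x _ hx => rw [mul_smul_comm]; exact Submodule.smul_mem _ r hx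

lemma closed_e1 : ∀ s ∈ SS, e 1 * s ∈ SS := by
  intro s hs
  induction hs using Submodule.span_induction with
  | mem x hx =>
    rcases hx with rfl|rfl|rfl|rfl|rfl|rfl|rfl|rfl
    · rw [mul_one]; exact e1_mem
    · rw [e10']; exact Submodule.neg_mem _ e01_mem
    · rw [e_sq]; exact one_mem_SS
    · exact e12_mem
    · rw [p1_01]; exact Submodule.neg_mem _ e0_mem
    · rw [e10]; exact Submodule.neg_mem _ e012_mem
    · rw [e_cancel]; exact e2_mem
    · rw [p1_012]; exact Submodule.neg_mem _ e02_mem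
  | zero => rw [mul_zero]; exact Submodule.zero_mem SS
  | add x y _ _ hx hy => rw [mul_add]; exact Submodule.add_mem _ hx hy
  | smul r x _ hx => rw [mul_smul_comm]; exact Submodule.smul_mem _ r hx

lemma closed_e2 : ∀ s ∈ SS, e 2 * s ∈ SS := by
  intro s hs
  induction hs using Submodule.span_induction with
  | mem x hx =>
    rcases hx with rfl|rfl|rfl|rfl|rfl|rfl|rfl|rfl
    · rw [mul_one]; exact e2_mem
    · rw [e20']; exact Submodule.neg_mem _ e02_mem
    · rw [e21']; exact Submodule.neg_mem _ e12_mem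
    · rw [e_sq]; exact one_mem_SS
    · rw [p2_01]; exact e012_mem
    · rw [p2_02]; exact Submodule.neg_mem _ e0_mem
    · rw [p2_12]; exact Submodule.neg_mem _ e1_mem
    · rw [p2_012]; exact e01_mem
  | zero => rw [mul_zero]; exact Submodule.zero_mem SS
  | add x y _ _ hx hy => rw [mul_add]; exact Submodule.add_mem _ hx hy
  | smul r x _ hx => rw [mul_smul_comm]; exact Submodule.smul_mem _ r hx

lemma mul_mem_SS : ∀ x : Cl3, ∀ s ∈ SS, x * s ∈ SS := by
  intro x
  induction x using CliffordAlgebra.induction with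
  | algebraMap r =>
    intro s hs; rw [← Algebra.smul_def]; exact Submodule.smul_mem _ r hs
  | ι v =>
    intro s hs
    have hv : v = v 0 • (Pi.single 0 1 : Fin 3 → ℝ) + v 1 • (Pi.single 1 1 : Fin 3 → ℝ)
        + v 2 • (Pi.single 2 1 : Fin 3 → ℝ) := by ext i; fin_cases i <;> simp
    rw [hv]
    simp only [map_add, map_smul, add_mul, smul_mul_assoc]
    exact Submodule.add_mem _ (Submodule.add_mem _
      (Submodule.smul_mem _ _ (closed_e0 s hs)) (Submodule.smul_mem _ _ (closed_e1 s hs)))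
      (Submodule.smul_mem _ _ (closed_e2 s hs))
  | mul a b ha hb => intro s hs; rw [mul_assoc]; exact ha _ (hb _ hs)
  | add a b ha hb => intro s hs; rw [add_mul]; exact Submodule.add_mem _ (ha _ hs) (hb _ hs)

lemma mem_SS (x : Cl3) : x ∈ SS := by
  simpa using mul_mem_SS x 1 one_mem_SS

lemma cliffConj_add (x y : Cl3) : cliffConj (x + y) = cliffConj x + cliffConj y := by
  simp [cliffConj]

lemma cliffConj_smul (r : ℝ) (x : Cl3) : cliffConj (r • x) = r • cliffConj x := by
  simp [cliffConj]

lemma cliffConj_mul (x y : Cl3) : cliffConj (x * y) = cliffConj y * cliffConj x := by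
  simp [cliffConj, map_mul, reverse.map_mul]

lemma cliffConj_one : cliffConj (1 : Cl3) = 1 := by
  simp [cliffConj]

lemma cliffConj_e (i : Fin 3) : cliffConj (e i) = -(e i) := by
  simp [cliffConj, e, involute_ι, reverse_ι]

lemma cliffConj_cliffConj (x : Cl3) : cliffConj (cliffConj x) = x := by
  show reverse (involute (reverse (involute x))) = x
  rw [reverse_involute x, involute_involute, reverse_reverse]

/-- `X + conj X` is central. -/
lemma conj_add_central (X : Cl3) : ∀ M : Cl3, (X + cliffConj X) * M = M * (X + cliffConj X) := by
  induction mem_SS X using Submodule.span_induction with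
  | mem x hx =>
    rcases hx with rfl|rfl|rfl|rfl|rfl|rfl|rfl|rfl
    · intro M; rw [cliffConj_one]
      rw [one_add_one_eq_two, two_mul, mul_two]
    · intro M; rw [cliffConj_e, add_neg_cancel, zero_mul, mul_zero]
    · intro M; rw [cliffConj_e, add_neg_cancel, zero_mul, mul_zero]
    · intro M; rw [cliffConj_e, add_neg_cancel, zero_mul, mul_zero]
    · intro M
      rw [cliffConj_mul, cliffConj_e, cliffConj_e, neg_mul_neg, e10', add_neg_cancel,
        zero_mul, mul_zero]
    · intro M
      rw [cliffConj_mul, cliffConj_e, cliffConj_e, neg_mul_neg, e20', add_neg_cancel,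
        zero_mul, mul_zero]
    · intro M
      rw [cliffConj_mul, cliffConj_e, cliffConj_e, neg_mul_neg, e21', add_neg_cancel,
        zero_mul, mul_zero]
    · intro M
      have h1 : cliffConj (e 0 * (e 1 * e 2)) = e 0 * (e 1 * e 2) := by
        rw [cliffConj_mul, cliffConj_mul, cliffConj_e, cliffConj_e, cliffConj_e,
          neg_mul_neg, e21', neg_mul, mul_neg, neg_neg, mul_assoc, e20', mul_neg, e10,
          neg_neg]
      rw [h1, ← two_smul ℝ, smul_mul_assoc, mul_smul_comm]
      have : e 0 * (e 1 * e 2) = jj := by rw [jj, mul_assoc]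
      rw [this, jj_central]
  | zero => intro M; simp [cliffConj]
  | add x y _ _ hx hy =>
    intro M
    have : x + y + cliffConj (x + y) = (x + cliffConj x) + (y + cliffConj y) := by
      rw [cliffConj_add]; abel
    rw [this, add_mul, mul_add, hx, hy]
  | smul r x _ hx =>
    intro M
    rw [cliffConj_smul, ← smul_add, smul_mul_assoc, mul_smul_comm, hx]

lemma mul_conj_central (B M : Cl3) :
    (B * cliffConj B) * M = M * (B * cliffConj B) := by
  have hfix : cliffConj (B * cliffConj B) = B * cliffConj B := by
    rw [cliffConj_mul, cliffConj_cliffConj]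
  have h2 := conj_add_central (B * cliffConj B) M
  rw [hfix, ← two_smul ℝ, smul_mul_assoc, mul_smul_comm] at h2
  exact smul_right_injective Cl3 (two_ne_zero) h2

/-- Solution of Sylvester's equation `Y = AM + MB` in `Cl(ℝ³)`: with `A` invertible,
`(B + B̄ + A⁻¹BB̄ + A) M = A⁻¹ Y B̄ + Y`, and if `B + B̄ + A⁻¹BB̄ + A` is invertible then
`M = (B + B̄ + A⁻¹BB̄ + A)⁻¹ (A⁻¹ Y B̄ + Y)`. -/
theorem sylvester_equation (A B M Y Ainv : Cl3)
    (hY : Y = A * M + M * B)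
    (hAinv : A * Ainv = 1 ∧ Ainv * A = 1) :
    (B + cliffConj B + Ainv * B * cliffConj B + A) * M = Ainv * Y * cliffConj B + Y ∧
    ∀ Cinv : Cl3,
      Cinv * (B + cliffConj B + Ainv * B * cliffConj B + A) = 1 →
      (B + cliffConj B + Ainv * B * cliffConj B + A) * Cinv = 1 →
      M = Cinv * (Ainv * Y * cliffConj B + Y) := by
  have hs := conj_add_central B M
  have hp := mul_conj_central B M
  have key : (B + cliffConj B + Ainv * B * cliffConj B + A) * M
      = Ainv * Y * cliffConj B + Y := by
    subst hY
    have e1 : (B + cliffConj B + Ainv * B * cliffConj B + A) * M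
        = (B + cliffConj B) * M + Ainv * ((B * cliffConj B) * M) + A * M := by
      noncomm_ring
    have e2 : Ainv * (A * M + M * B) * cliffConj B + (A * M + M * B)
        = (Ainv * A) * (M * cliffConj B) + Ainv * (M * (B * cliffConj B))
          + A * M + M * B := by noncomm_ring
    rw [e1, hs, hp, e2, hAinv.2, one_mul]
    noncomm_ring
  refine ⟨key, fun Cinv h1 _ => ?_⟩
  calc M = 1 * M := (one_mul M).symm
    _ = Cinv * (B + cliffConj B + Ainv * B * cliffConj B + A) * M := by rw [h1]
    _ = Cinv * ((B + cliffConj B + Ainv * B * cliffConj B + A) * M) := mul_assoc _ _ _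
    _ = Cinv * (Ainv * Y * cliffConj B + Y) := by rw [key]
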